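/- (Aschbacher's theorem rephrased for string C-groups.) Let (G, {ρ_0,...,ρ_{r−1}}) be a string C-group of rank r, let I = {0,...,r−1}, and let Γ = Γ(G;(G_i)_{i∈I}) with G_i = ⟨ρ_j : j ∈ I \ {i}⟩. Then Γ is a thin, residually connected incidence geometry on which G acts flag-transitively by right multiplication; moreover, for all i, j with |i − j| > 1, every residue of Γ of type {i, j} is a generalized digon (so Γ has a string diagram). -/

import Mathlib

open Pointwise

/-- An incidence system `(X, *, t, I)`. -/
structure IncidenceSystem (X : Type*) (I : Type*) where
  inc : X → X → Prop
  typ : X → I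
  inc_refl : ∀ x, inc x x
  inc_symm : ∀ x y, inc x y → inc y x
  eq_of_inc_of_typ_eq : ∀ x y, inc x y → typ x = typ y → x = y

namespace IncidenceSystem

variable {X : Type*} {I : Type*} (Γ : IncidenceSystem X I)

/-- A flag is a set of pairwise incident elements. -/
def IsFlag (F : Set X) : Prop := ∀ x ∈ F, ∀ y ∈ F, Γ.inc x y

/-- A chamber is a flag of type `I`. -/
def IsChamber (C : Set X) : Prop := Γ.IsFlag C ∧ Γ.typ '' C = Set.univ

/-- An incidence geometry: every flag is contained in a chamber. -/
def IsGeometry : Prop := ∀ F : Set X, Γ.IsFlag F → ∃ C : Set X, Γ.IsChamber C ∧ F ⊆ C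

/-- The set of elements of the residue of a flag `F`: elements outside `F`
incident to every element of `F`. -/
def res (F : Set X) : Set X := {x : X | x ∉ F ∧ ∀ f ∈ F, Γ.inc x f}

/-- The incidence graph induced on a subset `S` is connected. -/
def ConnectedOn (S : Set X) : Prop :=
  S.Nonempty ∧ ∀ x ∈ S, ∀ y ∈ S,
    Relation.ReflTransGen (fun a b : X => a ∈ S ∧ b ∈ S ∧ a ≠ b ∧ Γ.inc a b) x y

/-- Residual connectedness: the incidence graph of every residue of rank at
least two (including `Γ` itself, the residue of the empty flag) is connected. -/
def ResiduallyConnected : Prop :=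
  ∀ F : Set X, Γ.IsFlag F →
    (∃ i j : I, i ≠ j ∧ i ∉ Γ.typ '' F ∧ j ∉ Γ.typ '' F) →
    Γ.ConnectedOn (Γ.res F)

/-- Thinness: every residue of rank one contains exactly two elements. -/
def Thin : Prop :=
  ∀ F : Set X, Γ.IsFlag F → (∃! i : I, i ∉ Γ.typ '' F) →
    ∃ x y : X, x ≠ y ∧ Γ.res F = {x, y}

/-- Firmness: every residue of rank one contains at least two elements. -/
def Firm : Prop :=
  ∀ F : Set X, Γ.IsFlag F → (∃! i : I, i ∉ Γ.typ '' F) →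
    ∃ x y : X, x ≠ y ∧ x ∈ Γ.res F ∧ y ∈ Γ.res F

/-- Two chambers are `i`-adjacent if they differ exactly in their elements of type `i`. -/
def Adjacent (C C' : Set X) (i : I) : Prop :=
  Γ.IsChamber C ∧ Γ.IsChamber C' ∧ C ≠ C' ∧
    {x ∈ C | Γ.typ x ≠ i} = {x ∈ C' | Γ.typ x ≠ i}

/-- Chamber-connectedness of the residue of the flag `F`: any two chambers
containing `F` are linked by a sequence of successively adjacent chambers
containing `F`. -/
def ChamberConnectedFrom (F : Set X) : Prop :=
  ∀ C C' : Set X, Γ.IsChamber C → Γ.IsChamber C' → F ⊆ C → F ⊆ C' →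
    Relation.ReflTransGen
      (fun A B : Set X => F ⊆ A ∧ F ⊆ B ∧ ∃ i : I, Γ.Adjacent A B i) C C'

/-- Strong chamber-connectedness: every residue of rank at least two
(including `Γ` itself) is chamber-connected. -/
def StronglyChamberConnected : Prop :=
  ∀ F : Set X, Γ.IsFlag F →
    (∃ i j : I, i ≠ j ∧ i ∉ Γ.typ '' F ∧ j ∉ Γ.typ '' F) →
    Γ.ChamberConnectedFrom F

/-- A type-preserving automorphism. -/
def IsAut (φ : Equiv.Perm X) : Prop :=
  (∀ x, Γ.typ (φ x) = Γ.typ x) ∧ ∀ x y, (Γ.inc (φ x) (φ y) ↔ Γ.inc x y)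

/-- The group `Aut_I(Γ)` of type-preserving automorphisms. -/
def autGroup : Subgroup (Equiv.Perm X) where
  carrier := {φ : Equiv.Perm X | Γ.IsAut φ}
  one_mem' := ⟨fun _ => rfl, fun _ _ => Iff.rfl⟩
  mul_mem' := by
    rintro φ ψ ⟨ht, hi⟩ ⟨ht', hi'⟩
    exact ⟨fun x => by rw [Equiv.Perm.mul_apply, ht, ht'],
      fun x y => by rw [Equiv.Perm.mul_apply, Equiv.Perm.mul_apply, hi, hi']⟩
  inv_mem' := by
    rintro φ ⟨ht, hi⟩
    refine ⟨fun x => ?_, fun x y => ?_⟩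
    · conv_rhs => rw [← (Equiv.Perm.eq_inv_iff_eq.mp rfl : φ (φ⁻¹ x) = x)]
      rw [ht]
    · conv_rhs => rw [← (Equiv.Perm.eq_inv_iff_eq.mp rfl : φ (φ⁻¹ x) = x),
        ← (Equiv.Perm.eq_inv_iff_eq.mp rfl : φ (φ⁻¹ y) = y)]
      exact (hi _ _).symm

/-- Two chambers are in the same orbit under `Aut_I(Γ)`. -/
def InSameOrbit (C C' : Set X) : Prop := ∃ φ ∈ Γ.autGroup, ⇑φ '' C = C'

/-- Flag-transitivity: `Aut_I(Γ)` is transitive on the flags of each type. -/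
def FlagTransitive : Prop :=
  ∀ F F' : Set X, Γ.IsFlag F → Γ.IsFlag F' → Γ.typ '' F = Γ.typ '' F' →
    ∃ φ ∈ Γ.autGroup, ⇑φ '' F = F'

/-- Chamber-transitivity: `Aut_I(Γ)` is transitive on chambers. -/
def ChamberTransitive : Prop :=
  ∀ C C' : Set X, Γ.IsChamber C → Γ.IsChamber C' → ∃ φ ∈ Γ.autGroup, ⇑φ '' C = C'

/-- Chirality: `Aut_I(Γ)` has exactly two orbits on chambers, and adjacent
chambers lie in distinct orbits. -/
def Chiral : Prop :=
  (∃ C₁ C₂ : Set X, Γ.IsChamber C₁ ∧ Γ.IsChamber C₂ ∧ ¬ Γ.InSameOrbit C₁ C₂ ∧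
    ∀ C : Set X, Γ.IsChamber C → Γ.InSameOrbit C C₁ ∨ Γ.InSameOrbit C C₂) ∧
  ∀ (C C' : Set X) (i : I), Γ.Adjacent C C' i → ¬ Γ.InSameOrbit C C'

/-- The `J`-truncation of `Γ`. -/
def truncation (J : Set I) : IncidenceSystem {x : X // Γ.typ x ∈ J} J where
  inc p q := Γ.inc p.1 q.1
  typ p := ⟨Γ.typ p.1, p.2⟩
  inc_refl p := Γ.inc_refl p.1
  inc_symm p q h := Γ.inc_symm _ _ h
  eq_of_inc_of_typ_eq p q h ht :=
    Subtype.ext (Γ.eq_of_inc_of_typ_eq _ _ h (congrArg Subtype.val ht))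

end IncidenceSystem

section CosetGeometry

variable {G : Type*} [Group G] {ι : Type*}

/-- The right coset `H g`. -/
def rcoset (H : Subgroup G) (g : G) : Set G := {x : G | x * g⁻¹ ∈ H}

lemma mem_rcoset_self (H : Subgroup G) (g : G) : g ∈ rcoset H g := by
  show g * g⁻¹ ∈ H
  simp only [mul_inv_cancel]
  exact H.one_mem

lemma rcoset_eq_of_mem {H : Subgroup G} {g x : G} (hx : x ∈ rcoset H g) :
    rcoset H x = rcoset H g := by
  ext y
  simp only [rcoset, Set.mem_setOf_eq] at *
  constructor
  · intro hy
    have h2 := H.mul_mem hy hx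
    have h3 : y * x⁻¹ * (x * g⁻¹) = y * g⁻¹ := by group
    rwa [h3] at h2
  · intro hy
    have h2 := H.mul_mem hy (H.inv_mem hx)
    have h3 : y * g⁻¹ * (x * g⁻¹)⁻¹ = y * x⁻¹ := by group
    rwa [h3] at h2

/-- Elements of the coset geometry `Γ(G; (G_i))`: pairs consisting of a type
`i` and a right coset of `G_i`. -/
def CosetElt (Gi : ι → Subgroup G) : Type _ :=
  { p : ι × Set G // ∃ g : G, p.2 = rcoset (Gi p.1) g }

/-- The coset incidence system `Γ(G; (G_i))` of Tits. -/
def cosetGeometry (Gi : ι → Subgroup G) : IncidenceSystem (CosetElt Gi) ι where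
  inc p q := (p.1.2 ∩ q.1.2).Nonempty
  typ p := p.1.1
  inc_refl := by
    rintro ⟨⟨i, S⟩, g, hg⟩
    dsimp at hg ⊢
    subst hg
    exact ⟨g, mem_rcoset_self _ g, mem_rcoset_self _ g⟩
  inc_symm := by
    rintro p q ⟨x, hx1, hx2⟩
    exact ⟨x, hx2, hx1⟩
  eq_of_inc_of_typ_eq := by
    rintro ⟨⟨i, S⟩, hS⟩ ⟨⟨j, T⟩, hT⟩ hinc hij
    obtain ⟨x, hx1, hx2⟩ := hinc
    dsimp at hij hx1 hx2 hS hT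
    subst hij
    obtain ⟨g, rfl⟩ := hS
    obtain ⟨h, rfl⟩ := hT
    apply Subtype.ext
    dsimp only
    rw [Prod.mk.injEq]
    exact ⟨rfl, by rw [← rcoset_eq_of_mem hx1, rcoset_eq_of_mem hx2]⟩

lemma rcoset_image_mul (H : Subgroup G) (g a : G) :
    (fun x : G => x * a) '' rcoset H g = rcoset H (g * a) := by
  ext y
  simp only [rcoset, Set.mem_image, Set.mem_setOf_eq, mul_inv_rev]
  constructor
  · rintro ⟨x, hx, rfl⟩
    have h3 : x * a * (a⁻¹ * g⁻¹) = x * g⁻¹ := by group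
    rwa [h3]
  · intro hy
    refine ⟨y * a⁻¹, ?_, by group⟩
    have h3 : y * a⁻¹ * g⁻¹ = y * (a⁻¹ * g⁻¹) := by group
    rwa [h3]

/-- Right multiplication by `a` on the coset geometry. -/
def rmul (Gi : ι → Subgroup G) (a : G) (p : CosetElt Gi) : CosetElt Gi :=
  ⟨(p.1.1, (fun x : G => x * a) '' p.1.2), by
    obtain ⟨g, hg⟩ := p.2
    exact ⟨g * a, by rw [hg, rcoset_image_mul]⟩⟩

/-- `G` acts flag-transitively on the coset geometry by right multiplication. -/
def GFlagTransitive (Gi : ι → Subgroup G) : Prop :=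
  ∀ F F' : Set (CosetElt Gi), (cosetGeometry Gi).IsFlag F → (cosetGeometry Gi).IsFlag F' →
    (cosetGeometry Gi).typ '' F = (cosetGeometry Gi).typ '' F' →
    ∃ a : G, rmul Gi a '' F = F'

/-- Only the identity of `G` fixes a chamber of the coset geometry. -/
def GFree (Gi : ι → Subgroup G) : Prop :=
  ∀ (a : G) (C : Set (CosetElt Gi)), (cosetGeometry Gi).IsChamber C →
    rmul Gi a '' C = C → a = 1

end CosetGeometry

/-- `(G, ρ)` is a C-group: the `ρ i` are involutions generating `G` and
satisfying the intersection property. -/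
def IsCGroup {G : Type*} [Group G] {r : ℕ} (ρ : Fin r → G) : Prop :=
  (∀ i, ρ i ≠ 1 ∧ ρ i * ρ i = 1) ∧
  Subgroup.closure (Set.range ρ) = ⊤ ∧
  ∀ K J : Set (Fin r),
    Subgroup.closure (ρ '' K) ⊓ Subgroup.closure (ρ '' J) =
      Subgroup.closure (ρ '' (K ∩ J))

/-- The parabolic subgroup `G⁺_K = ⟨α_i⁻¹ α_j : i, j ∈ K⟩` of a `C⁺`-group. -/
def GplusSub {G : Type*} [Group G] {r : ℕ} (α : Fin r → G) (K : Set (Fin r)) : Subgroup G :=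
  Subgroup.closure {g : G | ∃ i ∈ K, ∃ j ∈ K, g = (α i)⁻¹ * α j}

section StringCAux

variable {G : Type*} [Group G] {r : ℕ} {ρ : Fin r → G}

/-- The parabolic subgroup generated by the `ρ i`, `i ∈ K`. -/
def Pg (ρ : Fin r → G) (K : Set (Fin r)) : Subgroup G := Subgroup.closure (ρ '' K)

lemma Pg_mono {K L : Set (Fin r)} (h : K ⊆ L) : Pg ρ K ≤ Pg ρ L :=
  Subgroup.closure_mono (Set.image_mono h)

lemma rho_mem_Pg {i : Fin r} {K : Set (Fin r)} (h : i ∈ K) : ρ i ∈ Pg ρ K :=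
  Subgroup.subset_closure ⟨i, h, rfl⟩

lemma Pg_inf (hC : IsCGroup ρ) (K L : Set (Fin r)) : Pg ρ K ⊓ Pg ρ L = Pg ρ (K ∩ L) :=
  hC.2.2 K L

lemma Pg_univ (hC : IsCGroup ρ) : Pg ρ Set.univ = ⊤ := by
  rw [Pg, Set.image_univ]; exact hC.2.1

lemma rho_inv (hC : IsCGroup ρ) (i : Fin r) : (ρ i)⁻¹ = ρ i :=
  inv_eq_of_mul_eq_one_right (hC.1 i).2

lemma commute_rho (hC : IsCGroup ρ)
    (hst : ∀ i j : Fin r, 1 < Nat.dist i.val j.val → (ρ i * ρ j) * (ρ i * ρ j) = 1)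
    {i j : Fin r} (h : 1 < Nat.dist i.val j.val) : Commute (ρ i) (ρ j) := by
  show ρ i * ρ j = ρ j * ρ i
  calc ρ i * ρ j = (ρ i * ρ j)⁻¹ := eq_inv_of_mul_eq_one_left (hst i j h)
    _ = (ρ j)⁻¹ * (ρ i)⁻¹ := mul_inv_rev _ _
    _ = ρ j * ρ i := by rw [rho_inv hC, rho_inv hC]

lemma commute_Pg' {K L : Set (Fin r)} (hcomm : ∀ a ∈ K, ∀ b ∈ L, Commute (ρ a) (ρ b))
    {x : G} (hx : x ∈ Pg ρ K) : ∀ y : G, y ∈ Pg ρ L → Commute x y := by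
  refine Subgroup.closure_induction
    (p := fun x _ => ∀ y : G, y ∈ Pg ρ L → Commute x y) ?_ ?_ ?_ ?_ hx
  · rintro a ⟨i, hiK, rfl⟩ y hy
    refine Subgroup.closure_induction (p := fun y _ => Commute (ρ i) y) ?_ ?_ ?_ ?_ hy
    · rintro b ⟨j, hjL, rfl⟩; exact hcomm i hiK j hjL
    · exact Commute.one_right _
    · exact fun a b _ _ ha hb => ha.mul_right hb
    · exact fun a _ ha => ha.inv_right
  · exact fun y _ => Commute.one_left y
  · exact fun a b _ _ pa pb y hy => (pa y hy).mul_left (pb y hy)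
  · exact fun a _ pa y hy => (pa y hy).inv_left

lemma commute_Pg {K L : Set (Fin r)} (hcomm : ∀ a ∈ K, ∀ b ∈ L, Commute (ρ a) (ρ b))
    {x y : G} (hx : x ∈ Pg ρ K) (hy : y ∈ Pg ρ L) : Commute x y :=
  commute_Pg' hcomm hx y hy

lemma Pg_union_mul {K L : Set (Fin r)} (hcomm : ∀ a ∈ K, ∀ b ∈ L, Commute (ρ a) (ρ b))
    {g : G} (hg : g ∈ Pg ρ (K ∪ L)) : ∃ x ∈ Pg ρ K, ∃ y ∈ Pg ρ L, g = x * y := by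
  rw [Pg, Set.image_union] at hg
  refine Subgroup.closure_induction
    (p := fun g _ => ∃ x ∈ Pg ρ K, ∃ y ∈ Pg ρ L, g = x * y) ?_ ?_ ?_ ?_ hg
  · rintro a (ha | ha)
    · exact ⟨a, Subgroup.subset_closure ha, 1, one_mem _, (mul_one a).symm⟩
    · exact ⟨1, one_mem _, a, Subgroup.subset_closure ha, (one_mul a).symm⟩
  · exact ⟨1, one_mem _, 1, one_mem _, (one_mul 1).symm⟩
  · rintro a b _ _ ⟨x1, hx1, y1, hy1, rfl⟩ ⟨x2, hx2, y2, hy2, rfl⟩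
    refine ⟨x1 * x2, mul_mem hx1 hx2, y1 * y2, mul_mem hy1 hy2, ?_⟩
    have hc : Commute x2 y1 := commute_Pg hcomm hx2 hy1
    calc x1 * y1 * (x2 * y2) = x1 * (y1 * x2) * y2 := by group
      _ = x1 * (x2 * y1) * y2 := by rw [← hc.eq]
      _ = x1 * x2 * (y1 * y2) := by group
  · rintro a _ ⟨x, hx, y, hy, rfl⟩
    refine ⟨x⁻¹, inv_mem hx, y⁻¹, inv_mem hy, ?_⟩
    have hc : Commute x⁻¹ y⁻¹ := ((commute_Pg hcomm hx hy).inv_left).inv_right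
    rw [mul_inv_rev, ← hc.eq]

lemma mem_Pg_compl (hC : IsCGroup ρ) (M : Finset (Fin r)) {w : G}
    (h : ∀ j ∈ M, w ∈ Pg ρ ({j}ᶜ)) : w ∈ Pg ρ ((↑M : Set (Fin r))ᶜ) := by
  classical
  induction M using Finset.induction with
  | empty => rw [Finset.coe_empty, Set.compl_empty, Pg_univ hC]; trivial
  | @insert j M hjM ih =>
    have h1 : w ∈ Pg ρ ({j}ᶜ) ⊓ Pg ρ ((↑M : Set (Fin r))ᶜ) :=
      ⟨h j (Finset.mem_insert_self j M), ih fun t ht => h t (Finset.mem_insert_of_mem ht)⟩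
    rw [Pg_inf hC] at h1
    have hset : (({j}ᶜ ∩ (↑M)ᶜ : Set (Fin r))) = ((↑(insert j M) : Set (Fin r))ᶜ) := by
      ext t
      simp [not_or]
    rwa [hset] at h1

lemma Pg_singleton (hC : IsCGroup ρ) (i : Fin r) {w : G}
    (hw : w ∈ Pg ρ ({i} : Set (Fin r))) : w = 1 ∨ w = ρ i := by
  refine Subgroup.closure_induction (p := fun w _ => w = 1 ∨ w = ρ i) ?_ (Or.inl rfl) ?_ ?_ hw
  · rintro a ⟨j, hj, rfl⟩
    rw [Set.mem_singleton_iff] at hj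
    right; rw [hj]
  · rintro a b _ _ (rfl | rfl) (rfl | rfl)
    · left; rw [one_mul]
    · right; rw [one_mul]
    · right; rw [mul_one]
    · left; exact (hC.1 i).2
  · rintro a _ (rfl | rfl)
    · left; exact inv_one
    · right; exact rho_inv hC i

end StringCAux

section Helly

variable {G : Type*} [Group G] {r : ℕ} {ρ : Fin r → G}

lemma helly (hC : IsCGroup ρ)
    (hst : ∀ i j : Fin r, 1 < Nat.dist i.val j.val → (ρ i * ρ j) * (ρ i * ρ j) = 1)
    {Gi : Fin r → Subgroup G} (hGi : ∀ i, Gi i = Pg ρ ({i}ᶜ))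
    (T : Finset (Fin r)) (c : Fin r → G)
    (hpair : ∀ i ∈ T, ∀ j ∈ T, ∃ z, z ∈ rcoset (Gi i) (c i) ∧ z ∈ rcoset (Gi j) (c j)) :
    ∃ g : G, ∀ i ∈ T, g ∈ rcoset (Gi i) (c i) := by
  classical
  revert hpair
  induction T using Finset.strongInduction with
  | _ T ih =>
  intro hpair
  rcases T.eq_empty_or_nonempty with rfl | hne
  · exact ⟨1, by simp⟩
  set i1 := T.min' hne with hi1
  set iN := T.max' hne with hiN
  by_cases h1N : i1 = iN
  · refine ⟨c i1, fun i hi => ?_⟩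
    have hii : i = i1 := le_antisymm (h1N ▸ T.le_max' i hi) (T.min'_le i hi)
    rw [hii]
    exact mem_rcoset_self _ _
  have h1N' : i1 < iN := lt_of_le_of_ne (T.min'_le iN (T.max'_mem hne)) h1N
  set M := (T.erase i1).erase iN with hM
  rcases M.eq_empty_or_nonempty with hMe | hMne
  · obtain ⟨z, hz1, hzN⟩ := hpair i1 (T.min'_mem hne) iN (T.max'_mem hne)
    refine ⟨z, fun i hi => ?_⟩
    have hiM : i = iN ∨ i = i1 := by
      by_contra hcon
      push_neg at hcon
      have : i ∈ M := by
        rw [hM, Finset.mem_erase, Finset.mem_erase]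
        exact ⟨hcon.1, hcon.2, hi⟩
      rw [hMe] at this
      exact absurd this (Finset.notMem_empty i)
    rcases hiM with rfl | rfl
    exacts [hzN, hz1]
  · obtain ⟨μ, hμ⟩ := hMne
    have hμN' : μ ≠ iN := (Finset.mem_erase.1 hμ).1
    have hμ1' : μ ≠ i1 := (Finset.mem_erase.1 (Finset.mem_of_mem_erase hμ)).1
    have hμT : μ ∈ T := Finset.mem_of_mem_erase (Finset.mem_of_mem_erase hμ)
    have hμ1 : i1 < μ := lt_of_le_of_ne (T.min'_le μ hμT) (Ne.symm hμ1')
    have hμN : μ < iN := lt_of_le_of_ne (T.le_max' μ hμT) hμN'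
    obtain ⟨x, hx⟩ := ih (T.erase iN) (Finset.erase_ssubset (T.max'_mem hne))
      (fun i hi j hj => hpair i (Finset.mem_of_mem_erase hi) j (Finset.mem_of_mem_erase hj))
    obtain ⟨y, hy⟩ := ih (T.erase i1) (Finset.erase_ssubset (T.min'_mem hne))
      (fun i hi j hj => hpair i (Finset.mem_of_mem_erase hi) j (Finset.mem_of_mem_erase hj))
    have hxy : x * y⁻¹ ∈ Pg ρ ((↑M : Set (Fin r))ᶜ) := by
      apply mem_Pg_compl hC
      intro j hjM
      have hjN : j ≠ iN := (Finset.mem_erase.1 hjM).1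
      have hj1 : j ≠ i1 := (Finset.mem_erase.1 (Finset.mem_of_mem_erase hjM)).1
      have hjT : j ∈ T := Finset.mem_of_mem_erase (Finset.mem_of_mem_erase hjM)
      have hx' : x * (c j)⁻¹ ∈ Gi j := hx j (Finset.mem_erase.2 ⟨hjN, hjT⟩)
      have hy' : y * (c j)⁻¹ ∈ Gi j := hy j (Finset.mem_erase.2 ⟨hj1, hjT⟩)
      have heq : x * y⁻¹ = (x * (c j)⁻¹) * (y * (c j)⁻¹)⁻¹ := by group
      rw [← hGi j, heq]
      exact mul_mem hx' (inv_mem hy')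
    set E : Set (Fin r) := {t | t < μ ∧ t ∉ M} with hE
    set Fs : Set (Fin r) := {t | μ < t ∧ t ∉ M} with hFs
    have hsplit : ((↑M : Set (Fin r))ᶜ) = E ∪ Fs := by
      ext t
      simp only [Set.mem_compl_iff, Finset.mem_coe, Set.mem_union, hE, hFs, Set.mem_setOf_eq]
      constructor
      · intro ht
        have htμ : t ≠ μ := fun h => (h ▸ ht) hμ
        rcases lt_or_gt_of_ne htμ with h | h
        · exact Or.inl ⟨h, ht⟩
        · exact Or.inr ⟨h, ht⟩
      · rintro (⟨_, ht⟩ | ⟨_, ht⟩) <;> exact ht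
    have hcommEF : ∀ a ∈ E, ∀ b ∈ Fs, Commute (ρ a) (ρ b) := by
      intro a ha b hb
      refine commute_rho hC hst ?_
      have h1 : a.val < μ.val := ha.1
      have h2 : μ.val < b.val := hb.1
      simp only [Nat.dist]
      omega
    rw [hsplit] at hxy
    obtain ⟨e, he, f, hf, hef⟩ := Pg_union_mul hcommEF hxy
    have hfe : x * y⁻¹ = f * e := by rw [hef, (commute_Pg hcommEF he hf).eq]
    have hw2 : f⁻¹ * x = e * y := by
      have h2 : (x * y⁻¹) * y = (f * e) * y := by rw [hfe]
      rw [inv_mul_cancel_right] at h2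
      rw [h2]; group
    refine ⟨f⁻¹ * x, fun i hi => ?_⟩
    by_cases hiN' : i = iN
    · rw [hw2]
      have hyi : y * (c i)⁻¹ ∈ Gi i := hy i (Finset.mem_erase.2 ⟨hiN' ▸ h1N ∘ Eq.symm, hi⟩)
      have heI : e ∈ Gi i := by
        rw [hGi i]
        refine Pg_mono ?_ he
        intro t ht
        have : t < μ := ht.1
        rw [Set.mem_compl_singleton_iff]
        intro hti
        rw [hti, hiN'] at this
        exact absurd (this.trans hμN) (lt_irrefl _)
      show (e * y) * (c i)⁻¹ ∈ Gi i
      rw [mul_assoc]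
      exact mul_mem heI hyi
    · have hxi : x * (c i)⁻¹ ∈ Gi i := hx i (Finset.mem_erase.2 ⟨hiN', hi⟩)
      have hfI : f ∈ Gi i := by
        rw [hGi i]
        refine Pg_mono ?_ hf
        intro t ht
        rw [Set.mem_compl_singleton_iff]
        intro hti
        subst hti
        rcases ht with ⟨htμ, htM⟩
        have ht1 : t ≠ i1 := fun h => absurd (h ▸ htμ) (not_lt_of_gt (h ▸ hμ1))
        have : t ∈ M := by
          rw [hM, Finset.mem_erase, Finset.mem_erase]
          exact ⟨hiN', ht1, hi⟩
        exact htM this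
      show (f⁻¹ * x) * (c i)⁻¹ ∈ Gi i
      rw [mul_assoc]
      exact mul_mem (inv_mem hfI) hxi

end Helly

section CosetBridge

variable {G : Type*} [Group G] {r : ℕ} {ρ : Fin r → G} {Gi : Fin r → Subgroup G}

/-- The element of the coset geometry given by the coset `G_i g`. -/
def elt (Gi : Fin r → Subgroup G) (i : Fin r) (g : G) : CosetElt Gi :=
  ⟨(i, rcoset (Gi i) g), ⟨g, rfl⟩⟩

lemma elt_typ (i : Fin r) (g : G) : (cosetGeometry Gi).typ (elt Gi i g) = i := rfl

lemma elt_snd (i : Fin r) (g : G) : (elt Gi i g).1.2 = rcoset (Gi i) g := rfl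

lemma mem_elt_self (i : Fin r) (g : G) : g ∈ (elt Gi i g).1.2 := mem_rcoset_self _ _

lemma eq_elt_of_mem {f : CosetElt Gi} {g : G} (hg : g ∈ f.1.2) : f = elt Gi f.1.1 g := by
  obtain ⟨⟨i, S⟩, a, ha⟩ := f
  dsimp only at ha hg ⊢
  subst ha
  exact Subtype.ext (by dsimp only [elt]; rw [rcoset_eq_of_mem hg])

lemma elt_eq_of_rcoset {k : Fin r} {a b : G} (h : rcoset (Gi k) a = rcoset (Gi k) b) :
    elt Gi k a = elt Gi k b :=
  Subtype.ext (congrArg (fun s => ((k, s) : Fin r × Set G)) h)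

lemma rmul_elt (a : G) (i : Fin r) (g : G) :
    rmul Gi a (elt Gi i g) = elt Gi i (g * a) := by
  apply Subtype.ext
  show (i, (fun x => x * a) '' rcoset (Gi i) g) = (i, rcoset (Gi i) (g * a))
  rw [rcoset_image_mul]

lemma flag_common (hC : IsCGroup ρ)
    (hst : ∀ i j : Fin r, 1 < Nat.dist i.val j.val → (ρ i * ρ j) * (ρ i * ρ j) = 1)
    (hGi : ∀ i, Gi i = Pg ρ ({i}ᶜ))
    {F : Set (CosetElt Gi)} (hF : (cosetGeometry Gi).IsFlag F) :
    ∃ g : G, ∀ f ∈ F, g ∈ f.1.2 := by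
  classical
  have hrep : ∀ i : Fin r, ∃ g : G, ∀ f ∈ F, f.1.1 = i → f.1.2 = rcoset (Gi i) g := by
    intro i
    by_cases hi : ∃ f ∈ F, f.1.1 = i
    · obtain ⟨f, hfF, hfi⟩ := hi
      subst hfi
      obtain ⟨a, ha⟩ := f.2
      refine ⟨a, fun f' hf' hf'i => ?_⟩
      have hff : f' = f :=
        (cosetGeometry Gi).eq_of_inc_of_typ_eq f' f (hF f' hf' f hfF) hf'i
      rw [hff, ha]
    · exact ⟨1, fun f hf hfi => absurd ⟨f, hf, hfi⟩ hi⟩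
  choose c hc using hrep
  set T : Finset (Fin r) := Finset.univ.filter (fun i => ∃ f ∈ F, f.1.1 = i) with hT
  have hpair : ∀ i ∈ T, ∀ j ∈ T, ∃ z, z ∈ rcoset (Gi i) (c i) ∧ z ∈ rcoset (Gi j) (c j) := by
    intro i hi j hj
    rw [hT, Finset.mem_filter] at hi hj
    obtain ⟨fi, hfiF, hfii⟩ := hi.2
    obtain ⟨fj, hfjF, hfji⟩ := hj.2
    obtain ⟨z, hz1, hz2⟩ := hF fi hfiF fj hfjF
    exact ⟨z, by rw [← hc i fi hfiF hfii]; exact hz1, by rw [← hc j fj hfjF hfji]; exact hz2⟩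
  obtain ⟨g, hg⟩ := helly hC hst hGi T c hpair
  refine ⟨g, fun f hf => ?_⟩
  have hfT : f.1.1 ∈ T := by
    rw [hT, Finset.mem_filter]
    exact ⟨Finset.mem_univ _, f, hf, rfl⟩
  have h1 := hg f.1.1 hfT
  rwa [← hc f.1.1 f hf rfl] at h1

end CosetBridge

section ResLemmas

variable {G : Type*} [Group G] {r : ℕ} {ρ : Fin r → G} {Gi : Fin r → Subgroup G}

/-- Normal form for elements of the residue of a flag: every element of `res F`
has a type missing from `F` and its coset is `G_k (w g)` with `w` in the parabolic
generated by the missing types. -/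
lemma res_elt (hC : IsCGroup ρ)
    (hst : ∀ i j : Fin r, 1 < Nat.dist i.val j.val → (ρ i * ρ j) * (ρ i * ρ j) = 1)
    (hGi : ∀ i, Gi i = Pg ρ ({i}ᶜ))
    {F : Set (CosetElt Gi)} (hF : (cosetGeometry Gi).IsFlag F)
    {g : G} (hg : ∀ f ∈ F, g ∈ f.1.2)
    {x : CosetElt Gi} (hx : x ∈ (cosetGeometry Gi).res F) :
    ∃ w : G, x = elt Gi x.1.1 (w * g) ∧
      w ∈ Pg ρ {t | t ∉ (cosetGeometry Gi).typ '' F} ∧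
      x.1.1 ∉ (cosetGeometry Gi).typ '' F := by
  classical
  obtain ⟨hxF, hxinc⟩ := hx
  have hxt : x.1.1 ∉ (cosetGeometry Gi).typ '' F := by
    rintro ⟨f, hfF, hft⟩
    have hxf : x = f :=
      (cosetGeometry Gi).eq_of_inc_of_typ_eq x f (hxinc f hfF) hft.symm
    exact hxF (by rw [hxf]; exact hfF)
  have hflag : (cosetGeometry Gi).IsFlag (insert x F) := by
    intro a ha b hb
    rcases Set.mem_insert_iff.1 ha with ha' | haF
    · rcases Set.mem_insert_iff.1 hb with hb' | hbF
      · rw [ha', hb']; exact (cosetGeometry Gi).inc_refl x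
      · rw [ha']; exact hxinc b hbF
    · rcases Set.mem_insert_iff.1 hb with hb' | hbF
      · rw [hb']; exact (cosetGeometry Gi).inc_symm _ _ (hxinc a haF)
      · exact hF a haF b hbF
  obtain ⟨w, hw⟩ := flag_common hC hst hGi hflag
  have hwx : w ∈ x.1.2 := hw x (Set.mem_insert _ _)
  refine ⟨w * g⁻¹, ?_, ?_, hxt⟩
  · have h1 : w * g⁻¹ * g = w := by group
    rw [h1]
    exact eq_elt_of_mem hwx
  · have hset : ({t | t ∉ (cosetGeometry Gi).typ '' F} : Set (Fin r)) =
        ((↑(Finset.univ.filter (fun t => t ∈ (cosetGeometry Gi).typ '' F)) : Set (Fin r)))ᶜ := by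
      ext t
      simp
    rw [hset]
    apply mem_Pg_compl hC
    intro j hj
    rw [Finset.mem_filter] at hj
    obtain ⟨f, hfF, hft⟩ := hj.2
    have hft' : f.1.1 = j := hft
    have hfg : f = elt Gi j g := by
      have h2 := eq_elt_of_mem (hg f hfF)
      rwa [hft'] at h2
    have hwf : w ∈ f.1.2 := hw f (Set.mem_insert_of_mem _ hfF)
    rw [hfg, elt_snd] at hwf
    have : w * g⁻¹ ∈ Gi j := hwf
    rwa [hGi j] at this

/-- Converse: such elements belong to the residue. -/
lemma res_mem (hGi : ∀ i, Gi i = Pg ρ ({i}ᶜ))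
    {F : Set (CosetElt Gi)} {g : G} (hg : ∀ f ∈ F, g ∈ f.1.2)
    {k : Fin r} (hk : k ∉ (cosetGeometry Gi).typ '' F)
    {w : G} (hw : w ∈ Pg ρ {t | t ∉ (cosetGeometry Gi).typ '' F}) :
    elt Gi k (w * g) ∈ (cosetGeometry Gi).res F := by
  constructor
  · intro hmem
    exact hk ⟨_, hmem, rfl⟩
  · intro f hfF
    have hfg := eq_elt_of_mem (hg f hfF)
    have htF : f.1.1 ∈ (cosetGeometry Gi).typ '' F := ⟨f, hfF, rfl⟩
    have hsub : Pg ρ {t | t ∉ (cosetGeometry Gi).typ '' F} ≤ Gi f.1.1 := by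
      rw [hGi]
      refine Pg_mono ?_
      intro t ht
      rw [Set.mem_compl_singleton_iff]
      intro hti
      exact (hti ▸ ht) htF
    refine ⟨w * g, mem_rcoset_self _ _, ?_⟩
    rw [hfg, elt_snd]
    show (w * g) * g⁻¹ ∈ Gi f.1.1
    have h1 : (w * g) * g⁻¹ = w := by group
    rw [h1]
    exact hsub hw

end ResLemmas

/-- Aschbacher's theorem rephrased for string C-groups. -/
theorem stmt_4 {G : Type*} [Group G] {r : ℕ} (ρ : Fin r → G)
    (hCgrp : IsCGroup ρ)
    (hstring : ∀ i j : Fin r, 1 < Nat.dist i.val j.val → (ρ i * ρ j) * (ρ i * ρ j) = 1)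
    (Gi : Fin r → Subgroup G)
    (hGi : ∀ i : Fin r, Gi i = Subgroup.closure (ρ '' ({i}ᶜ : Set (Fin r)))) :
    (cosetGeometry Gi).IsGeometry ∧ (cosetGeometry Gi).Thin ∧
      (cosetGeometry Gi).ResiduallyConnected ∧ GFlagTransitive Gi ∧
      ∀ i j : Fin r, 1 < Nat.dist i.val j.val →
        ∀ F : Set (CosetElt Gi), (cosetGeometry Gi).IsFlag F →
          (cosetGeometry Gi).typ '' F = ({i, j}ᶜ : Set (Fin r)) →
          ∀ x ∈ (cosetGeometry Gi).res F, ∀ y ∈ (cosetGeometry Gi).res F,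
            (cosetGeometry Gi).typ x = i → (cosetGeometry Gi).typ y = j →
            (cosetGeometry Gi).inc x y := by
  classical
  have hGiP : ∀ i, Gi i = Pg ρ ({i}ᶜ) := fun i => hGi i
  refine ⟨?_, ?_, ?_, ?_, ?_⟩
  -- 1. IsGeometry
  · intro F hF
    obtain ⟨g, hg⟩ := flag_common hCgrp hstring hGiP hF
    refine ⟨Set.range (fun i => elt Gi i g), ⟨?_, ?_⟩, ?_⟩
    · rintro a ⟨i, rfl⟩ b ⟨j, rfl⟩
      exact ⟨g, mem_elt_self _ _, mem_elt_self _ _⟩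
    · apply Set.eq_univ_of_forall
      intro i
      exact ⟨elt Gi i g, ⟨i, rfl⟩, rfl⟩
    · intro f hf
      exact ⟨f.1.1, (eq_elt_of_mem (hg f hf)).symm⟩
  -- 2. Thin
  · intro F hF hone
    obtain ⟨i, hi, hiu⟩ := hone
    obtain ⟨g, hg⟩ := flag_common hCgrp hstring hGiP hF
    have hsetP : ({t | t ∉ (cosetGeometry Gi).typ '' F} : Set (Fin r)) = {i} := by
      ext t
      simp only [Set.mem_setOf_eq, Set.mem_singleton_iff]
      exact ⟨fun h => hiu t h, fun h => h ▸ hi⟩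
    refine ⟨elt Gi i g, elt Gi i (ρ i * g), ?_, ?_⟩
    · intro he
      have h1 : ρ i * g ∈ (elt Gi i g).1.2 := by rw [he]; exact mem_elt_self _ _
      have h2 : ρ i ∈ Gi i := by
        have h3 : (ρ i * g) * g⁻¹ ∈ Gi i := h1
        have h4 : (ρ i * g) * g⁻¹ = ρ i := by group
        rwa [h4] at h3
      have h3 : ρ i ∈ Pg ρ ({i}ᶜ) ⊓ Pg ρ {i} :=
        ⟨by rwa [hGiP i] at h2, rho_mem_Pg rfl⟩
      rw [Pg_inf hCgrp, Set.compl_inter_self] at h3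
      have h4 : Pg ρ (∅ : Set (Fin r)) = ⊥ := by
        rw [Pg, Set.image_empty, Subgroup.closure_empty]
      rw [h4, Subgroup.mem_bot] at h3
      exact (hCgrp.1 i).1 h3
    · ext x
      simp only [Set.mem_insert_iff, Set.mem_singleton_iff]
      constructor
      · intro hx
        obtain ⟨w, hxw, hwP, hxt⟩ := res_elt hCgrp hstring hGiP hF hg hx
        have hxi : x.1.1 = i := hiu x.1.1 hxt
        rw [hsetP] at hwP
        rcases Pg_singleton hCgrp i hwP with rfl | rfl
        · left
          have h5 : elt Gi x.1.1 (1 * g) = elt Gi i g := by rw [hxi, one_mul]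
          exact hxw.trans h5
        · right
          have h5 : elt Gi x.1.1 (ρ i * g) = elt Gi i (ρ i * g) := by rw [hxi]
          exact hxw.trans h5
      · rintro (rfl | rfl)
        · have h5 := res_mem hGiP hg hi (w := 1) (one_mem _)
          rwa [one_mul] at h5
        · exact res_mem hGiP hg hi (w := ρ i) (by rw [hsetP]; exact rho_mem_Pg rfl)
  -- 3. ResiduallyConnected
  · intro F hF htwo
    obtain ⟨i0, j0, hij0, hi0, hj0⟩ := htwo
    obtain ⟨g, hg⟩ := flag_common hCgrp hstring hGiP hF
    constructor
    · exact ⟨elt Gi i0 (1 * g), res_mem hGiP hg hi0 (one_mem _)⟩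
    · intro x hx y hy
      obtain ⟨u, hxu, huP, hxt⟩ := res_elt hCgrp hstring hGiP hF hg hx
      obtain ⟨v, hyv, hvP, hyt⟩ := res_elt hCgrp hstring hGiP hF hg hy
      set R := fun a b : CosetElt Gi => a ∈ (cosetGeometry Gi).res F ∧
        b ∈ (cosetGeometry Gi).res F ∧ a ≠ b ∧ (cosetGeometry Gi).inc a b with hR
      have hRsymm : Symmetric R := by
        rintro a b ⟨h1, h2, h3, h4⟩
        exact ⟨h2, h1, h3.symm, (cosetGeometry Gi).inc_symm _ _ h4⟩
      have hop : ∀ (k l : Fin r), k ∉ (cosetGeometry Gi).typ '' F →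
          l ∉ (cosetGeometry Gi).typ '' F → k ≠ l →
          ∀ w ∈ Pg ρ {t | t ∉ (cosetGeometry Gi).typ '' F},
          R (elt Gi k (w * g)) (elt Gi l (w * g)) := by
        intro k l hk hl hkl w hw
        refine ⟨res_mem hGiP hg hk hw, res_mem hGiP hg hl hw, ?_, ?_⟩
        · intro h
          exact hkl (congrArg (fun z : CosetElt Gi => z.1.1) h)
        · exact ⟨w * g, mem_elt_self _ _, mem_elt_self _ _⟩
      have hstep : ∀ (k : Fin r), k ∉ (cosetGeometry Gi).typ '' F →
          ∀ (t : Fin r), t ∉ (cosetGeometry Gi).typ '' F →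
          ∀ w ∈ Pg ρ {t | t ∉ (cosetGeometry Gi).typ '' F},
          Relation.ReflTransGen R (elt Gi k (w * g)) (elt Gi k ((ρ t * w) * g)) := by
        intro k hk t ht w hw
        by_cases htk : t = k
        · subst htk
          have hl : ∃ l, l ∉ (cosetGeometry Gi).typ '' F ∧ l ≠ t := by
            by_cases h : i0 = t
            · exact ⟨j0, hj0, fun hjt => hij0 (h.trans hjt.symm)⟩
            · exact ⟨i0, hi0, h⟩
          obtain ⟨l, hlF, hlt⟩ := hl
          have htw : ρ t * w ∈ Pg ρ {s | s ∉ (cosetGeometry Gi).typ '' F} :=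
            mul_mem (rho_mem_Pg ht) hw
          have e1 : R (elt Gi t (w * g)) (elt Gi l (w * g)) :=
            hop t l hk hlF (Ne.symm hlt) w hw
          have e2 : R (elt Gi l (w * g)) (elt Gi t ((ρ t * w) * g)) := by
            refine ⟨res_mem hGiP hg hlF hw, res_mem hGiP hg hk htw, ?_, ?_⟩
            · intro h
              exact hlt (congrArg (fun z : CosetElt Gi => z.1.1) h)
            · refine ⟨(ρ t * w) * g, ?_, mem_elt_self _ _⟩
              show ((ρ t * w) * g) * (w * g)⁻¹ ∈ Gi l
              have h5 : ((ρ t * w) * g) * (w * g)⁻¹ = ρ t := by group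
              rw [h5, hGiP l]
              exact rho_mem_Pg (Set.mem_compl_singleton_iff.2 (Ne.symm hlt))
          exact (Relation.ReflTransGen.single e1).tail e2
        · have hco : rcoset (Gi k) ((ρ t * w) * g) = rcoset (Gi k) (w * g) := by
            apply rcoset_eq_of_mem
            show ((ρ t * w) * g) * (w * g)⁻¹ ∈ Gi k
            have h5 : ((ρ t * w) * g) * (w * g)⁻¹ = ρ t := by group
            rw [h5, hGiP k]
            exact rho_mem_Pg (Set.mem_compl_singleton_iff.2 htk)
          have h6 := elt_eq_of_rcoset (Gi := Gi) hco
          rw [h6]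
      have hwalk : ∀ c ∈ Pg ρ {t | t ∉ (cosetGeometry Gi).typ '' F},
          ∀ w ∈ Pg ρ {t | t ∉ (cosetGeometry Gi).typ '' F},
          ∀ k, k ∉ (cosetGeometry Gi).typ '' F →
          Relation.ReflTransGen R (elt Gi k (w * g)) (elt Gi k ((c * w) * g)) := by
        intro c hc
        refine Subgroup.closure_induction
          (p := fun c _ => ∀ w ∈ Pg ρ {t | t ∉ (cosetGeometry Gi).typ '' F},
            ∀ k, k ∉ (cosetGeometry Gi).typ '' F →
            Relation.ReflTransGen R (elt Gi k (w * g)) (elt Gi k ((c * w) * g)))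
          ?_ ?_ ?_ ?_ hc
        · rintro a ⟨t, ht, rfl⟩ w hw k hk
          exact hstep k hk t ht w hw
        · intro w hw k hk
          rw [one_mul]
        · rintro a b ha hb pa pb w hw k hk
          have h1 := pb w hw k hk
          have h2 := pa (b * w) (mul_mem hb hw) k hk
          rw [← mul_assoc] at h2
          exact h1.trans h2
        · rintro a ha pa w hw k hk
          have h1 := pa (a⁻¹ * w) (mul_mem (inv_mem ha) hw) k hk
          have h2 : a * (a⁻¹ * w) = w := by group
          rw [h2] at h1
          haveI : Std.Symm R := ⟨hRsymm⟩; exact Std.Symm.symm _ _ h1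
      have hpath1 := hwalk (v * u⁻¹) (mul_mem hvP (inv_mem huP)) u huP x.1.1 hxt
      have hvv : (v * u⁻¹) * u = v := by group
      rw [hvv] at hpath1
      have hmain : Relation.ReflTransGen R (elt Gi x.1.1 (u * g)) (elt Gi y.1.1 (v * g)) := by
        rcases eq_or_ne x.1.1 y.1.1 with he | hne
        · rw [← he]; exact hpath1
        · exact hpath1.tail (hop x.1.1 y.1.1 hxt hyt hne v hvP)
      rw [hR] at hmain
      rw [hxu, hyv]
      exact hmain
  -- 4. GFlagTransitive
  · intro F F' hF hF' hT
    obtain ⟨g, hg⟩ := flag_common hCgrp hstring hGiP hF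
    obtain ⟨h, hh⟩ := flag_common hCgrp hstring hGiP hF'
    refine ⟨g⁻¹ * h, ?_⟩
    ext z
    constructor
    · rintro ⟨f, hfF, rfl⟩
      have hfe := eq_elt_of_mem (hg f hfF)
      have h1 : rmul Gi (g⁻¹ * h) f = elt Gi f.1.1 h := by
        conv_lhs => rw [hfe]
        rw [rmul_elt]
        have h2 : g * (g⁻¹ * h) = h := by group
        rw [h2]
      rw [h1]
      have h3 : f.1.1 ∈ (cosetGeometry Gi).typ '' F' := by
        rw [← hT]; exact ⟨f, hfF, rfl⟩
      obtain ⟨f', hf'F, hf't⟩ := h3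
      have hf't' : f'.1.1 = f.1.1 := hf't
      have h4 : f' = elt Gi f.1.1 h := by
        have h5 := eq_elt_of_mem (hh f' hf'F)
        rwa [hf't'] at h5
      rw [← h4]
      exact hf'F
    · intro hz
      have hzt : z.1.1 ∈ (cosetGeometry Gi).typ '' F := by
        rw [hT]; exact ⟨z, hz, rfl⟩
      obtain ⟨f, hfF, hft⟩ := hzt
      have hft' : f.1.1 = z.1.1 := hft
      refine ⟨f, hfF, ?_⟩
      have hfe := eq_elt_of_mem (hg f hfF)
      have hze := eq_elt_of_mem (hh z hz)
      conv_lhs => rw [hfe]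
      rw [rmul_elt]
      have h2 : g * (g⁻¹ * h) = h := by group
      rw [h2, hft']
      exact hze.symm
  -- 5. string diagram / generalized digons
  · intro i j hdist F hF hTF x hx y hy hxi hyj
    have hij : i ≠ j := by
      intro h
      rw [h, Nat.dist_self] at hdist
      exact absurd hdist (by norm_num)
    obtain ⟨g, hg⟩ := flag_common hCgrp hstring hGiP hF
    obtain ⟨u, hxu, huP, hxt⟩ := res_elt hCgrp hstring hGiP hF hg hx
    obtain ⟨v, hyv, hvP, hyt⟩ := res_elt hCgrp hstring hGiP hF hg hy
    have hDc : ({t | t ∉ (cosetGeometry Gi).typ '' F} : Set (Fin r)) = {i, j} := by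
      ext t
      rw [Set.mem_setOf_eq, hTF]
      simp only [Set.mem_compl_iff, Set.mem_insert_iff, Set.mem_singleton_iff, not_not, not_or]
      tauto
    rw [hDc] at huP hvP
    have hcommij : ∀ a ∈ ({i} : Set (Fin r)), ∀ b ∈ ({j} : Set (Fin r)),
        Commute (ρ a) (ρ b) := by
      intro a ha b hb
      rw [Set.mem_singleton_iff] at ha hb
      subst ha; subst hb
      exact commute_rho hCgrp hstring hdist
    have hps : u * v⁻¹ ∈ Pg ρ ({i} ∪ {j} : Set (Fin r)) := by
      have h1 : ({i} ∪ {j} : Set (Fin r)) = {i, j} := by rw [Set.singleton_union]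
      rw [h1]
      exact mul_mem huP (inv_mem hvP)
    obtain ⟨a, haP, b, hbP, hab⟩ := Pg_union_mul hcommij hps
    have hba : u * v⁻¹ = b * a := by rw [hab, (commute_Pg hcommij haP hbP).eq]
    have hxi' : x.1.1 = i := hxi
    have hyj' : y.1.1 = j := hyj
    have hx2 : x.1.2 = rcoset (Gi i) (u * g) := by
      conv_lhs => rw [hxu]
      rw [elt_snd, hxi']
    have hy2 : y.1.2 = rcoset (Gi j) (v * g) := by
      conv_lhs => rw [hyv]
      rw [elt_snd, hyj']
    refine ⟨b⁻¹ * (u * g), ?_, ?_⟩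
    · rw [hx2]
      show (b⁻¹ * (u * g)) * (u * g)⁻¹ ∈ Gi i
      have h5 : (b⁻¹ * (u * g)) * (u * g)⁻¹ = b⁻¹ := by group
      rw [h5, hGiP i]
      refine inv_mem (Pg_mono ?_ hbP)
      intro t ht
      rw [Set.mem_singleton_iff] at ht
      subst ht
      exact Set.mem_compl_singleton_iff.2 (Ne.symm hij)
    · have hz : b⁻¹ * (u * g) = a * (v * g) := by
        have h2 : u = b * a * v := by
          rw [← hba]
          group
        rw [h2]; group
      rw [hz, hy2]
      show (a * (v * g)) * (v * g)⁻¹ ∈ Gi j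
      have h5 : (a * (v * g)) * (v * g)⁻¹ = a := by group
      rw [h5, hGiP j]
      refine Pg_mono ?_ haP
      intro t ht
      rw [Set.mem_singleton_iff] at ht
      subst ht
      exact Set.mem_compl_singleton_iff.2 hij
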